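/- Let (F,θ) be an ID-field of characteristic p > 0, let E be a PPV-field over F with PPV-ring R ⊆ E, and let F̃ be an intermediate ID-field, F ⊆ F̃ ⊆ E, which is itself a PPV-field over F with PPV-ring R̃ ⊆ F̃ (so Quot(R̃) = F̃). Then R̃ = F̃ ∩ R. -/

import Mathlib

open scoped TensorProduct

/-- `binom(i+j, i)` for multi-indices: `∏ μ, (i μ + j μ).choose (i μ)`. -/
def multiChoose {m : ℕ} (i j : Fin m →₀ ℕ) : ℕ :=
  ∏ μ : Fin m, Nat.choose (i μ + j μ) (i μ)

/-- An `m`-variate iterative derivation on a commutative ring `R`: a ring homomorphism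
`θ : R → R[[T_1,…,T_m]]`, written `θ(r) = Σ_k θ^{(k)}(r)·T^k`, with `θ^{(0)} = id` and
`θ^{(i)} ∘ θ^{(j)} = binom(i+j,i)·θ^{(i+j)}` for all multi-indices `i, j`. -/
structure IterativeDerivation (m : ℕ) (R : Type*) [CommRing R] where
  toRingHom : R →+* MvPowerSeries (Fin m) R
  coeff_zero : ∀ r : R, MvPowerSeries.coeff (R := R) 0 (toRingHom r) = r
  iterate : ∀ (i j : Fin m →₀ ℕ) (r : R),
    MvPowerSeries.coeff (R := R) i (toRingHom (MvPowerSeries.coeff (R := R) j (toRingHom r))) =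
      multiChoose i j • MvPowerSeries.coeff (R := R) (i + j) (toRingHom r)

namespace IterativeDerivation

/-- The coefficient maps `θ^{(k)} : R → R` of an iterative derivation. -/
noncomputable def D {m : ℕ} {R : Type*} [CommRing R] (θ : IterativeDerivation m R)
    (k : Fin m →₀ ℕ) (r : R) : R :=
  MvPowerSeries.coeff (R := R) k (θ.toRingHom r)

end IterativeDerivation

/-- An ID-ring extension: the iterative derivation `θR` on `R` restricts to `θF` on `F`
(via the algebra map). -/
def IterativeDerivation.Extends {m : ℕ} {F R : Type*} [CommRing F] [CommRing R] [Algebra F R]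
    (θF : IterativeDerivation m F) (θR : IterativeDerivation m R) : Prop :=
  ∀ (k : Fin m →₀ ℕ) (f : F), θR.D k (algebraMap F R f) = algebraMap F R (θF.D k f)

/-- `R` is ID-simple: no nontrivial ideals stable under all the `θ^{(k)}`. -/
def IterativeDerivation.IDSimple {m : ℕ} {R : Type*} [CommRing R]
    (θ : IterativeDerivation m R) : Prop :=
  ∀ I : Ideal R, (∀ (k : Fin m →₀ ℕ), ∀ x ∈ I, θ.D k x ∈ I) → I = ⊥ ∨ I = ⊤

/-- The coefficient matrices `A_k` of an iterative differential equation `θ(y) = A·y`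
over `(F, θ)`: `A_0 = 1` and
`binom(k+l,l)·A_{k+l} = Σ_{i+j=l} θ^{(i)}(A_k)·A_j` for all `k, l`. -/
def IsIDE {m n : ℕ} {F : Type*} [Field F] (θ : IterativeDerivation m F)
    (A : (Fin m →₀ ℕ) → Matrix (Fin n) (Fin n) F) : Prop :=
  A 0 = 1 ∧
  ∀ k l : Fin m →₀ ℕ,
    multiChoose l k • A (k + l) =
      ∑ ij ∈ Finset.HasAntidiagonal.antidiagonal l, (A k).map (θ.D ij.1) * A ij.2

/-- `Y ∈ GL_n(R)` is a fundamental solution matrix for the IDE `θ(y) = A·y`: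
`θ^{(k)}(Y) = A_k·Y` (entrywise) for all `k`. -/
def IsFundamentalMatrix {m n : ℕ} {F R : Type*} [Field F] [CommRing R] [Algebra F R]
    (θR : IterativeDerivation m R) (A : (Fin m →₀ ℕ) → Matrix (Fin n) (Fin n) F)
    (Y : Matrix (Fin n) (Fin n) R) : Prop :=
  IsUnit Y.det ∧
  ∀ k : Fin m →₀ ℕ, Y.map (θR.D k) = (A k).map (algebraMap F R) * Y

/-- Condition (4) of a PPV-ring: the constants of `R` are exactly (the images of) the
constants of `F`. -/
def ConstantsEq {m : ℕ} {F R : Type*} [CommRing F] [CommRing R] [Algebra F R]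
    (θF : IterativeDerivation m F) (θR : IterativeDerivation m R) : Prop :=
  ∀ r : R, (∀ k : Fin m →₀ ℕ, k ≠ 0 → θR.D k r = 0) →
    ∃ f : F, (∀ k : Fin m →₀ ℕ, k ≠ 0 → θF.D k f = 0) ∧ algebraMap F R f = r

/-- `(R, θR)` is a pseudo Picard–Vessiot ring over `(F, θF)` for the IDE given by `A`:
it is ID-simple, has a fundamental solution matrix `Y` which together with `det(Y)⁻¹`
generates `R` as an `F`-algebra, and has the same constants as `F`. -/
def IsPPVRing {m n : ℕ} {F R : Type*} [Field F] [CommRing R] [Algebra F R]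
    (θF : IterativeDerivation m F) (θR : IterativeDerivation m R)
    (A : (Fin m →₀ ℕ) → Matrix (Fin n) (Fin n) F) : Prop :=
  θF.Extends θR ∧ θR.IDSimple ∧
  (∃ Y : Matrix (Fin n) (Fin n) R, IsFundamentalMatrix θR A Y ∧
    Algebra.adjoin F
      ((Set.range fun ij : Fin n × Fin n => Y ij.1 ij.2) ∪ {Ring.inverse Y.det}) = ⊤) ∧
  ConstantsEq θF θR

/-- `S` (an `F`-subalgebra of the ID-field `E`, stable under the iterative derivation of
`E`) is a PPV-ring over `F` for the IDE given by `A`: it is stable under the derivation,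
ID-simple, contains a fundamental solution matrix `Y` which together with `det(Y)⁻¹`
generates `S` as an `F`-algebra, and its constants are exactly the constants of `F`. -/
def IsPPVSubalgebra {m n : ℕ} {F E : Type*} [Field F] [Field E] [Algebra F E]
    (θF : IterativeDerivation m F) (θE : IterativeDerivation m E)
    (S : Subalgebra F E) (A : (Fin m →₀ ℕ) → Matrix (Fin n) (Fin n) F) : Prop :=
  (∀ (k : Fin m →₀ ℕ), ∀ x ∈ S, θE.D k x ∈ S) ∧
  (∀ I : Ideal S,
    (∀ (k : Fin m →₀ ℕ) (x : S), x ∈ I → ∀ y : S, (y : E) = θE.D k (x : E) → y ∈ I) →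
      I = ⊥ ∨ I = ⊤) ∧
  (∃ Y : Matrix (Fin n) (Fin n) E,
    (∀ i j : Fin n, Y i j ∈ S) ∧ Y.det ≠ 0 ∧ Y.det⁻¹ ∈ S ∧
    (∀ k : Fin m →₀ ℕ, Y.map (θE.D k) = (A k).map (algebraMap F E) * Y) ∧
    Algebra.adjoin F
      ((Set.range fun ij : Fin n × Fin n => Y ij.1 ij.2) ∪ {Y.det⁻¹}) = S) ∧
  (∀ x ∈ S, (∀ k : Fin m →₀ ℕ, k ≠ 0 → θE.D k x = 0) →
    ∃ f : F, (∀ k : Fin m →₀ ℕ, k ≠ 0 → θF.D k f = 0) ∧ algebraMap F E f = x)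

/-- The quotient field of a subset `S` of a field `E`, as a subset of `E`. -/
def quotSet {E : Type*} [Field E] (S : Set E) : Set E :=
  {e : E | ∃ r ∈ S, ∃ s ∈ S, s ≠ 0 ∧ e = r / s}

/-!
Both inclusions come from one denominator argument. If `v ⊆ Quot(S)` spans a finite-dimensional
`F`-space containing all `θ^{(k)}(w)`, `w ∈ v`, then the denominators of `v` in `S` form a nonzero
`θ`-stable ideal (Leibniz rule and induction on `k`), so by ID-simplicity `1` is a denominator and
`v ⊆ S`. For `R̃ ⊆ R` take for `v` the entries of a fundamental matrix `Z` of `R̃` together with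
`det(Z)⁻¹`, using `Quot(R) = E`. For `F̃ ∩ R ⊆ R̃` take for `v` the `θ`-orbit of `x ∈ F̃ ∩ R`: it is
finite-dimensional since `R` is generated by elements with this property, and lies in
`F̃ = Quot(R̃)`.
-/

open MvPowerSeries

/-- The IDE matrix `Σ_k A_k T^k` as a matrix of power series. -/
def seriesMatrix {m n : ℕ} {F : Type*} [Field F] (A : (Fin m →₀ ℕ) → Matrix (Fin n) (Fin n) F) :
    Matrix (Fin n) (Fin n) (MvPowerSeries (Fin m) F) :=
  Matrix.of fun a b l => A l a b

def solutionGenerators {n : ℕ} {E : Type*} [Field E] (Y : Matrix (Fin n) (Fin n) E) : Set E :=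
  Set.range (fun ij : Fin n × Fin n => Y ij.1 ij.2) ∪ {Y.det⁻¹}

lemma finite_solutionGenerators {n : ℕ} {E : Type*} [Field E] (Y : Matrix (Fin n) (Fin n) E) :
    (solutionGenerators Y).Finite :=
  (Set.finite_range _).union (Set.finite_singleton _)

section Denominators

variable {F E : Type*} [Field F] [Field E] [Algebra F E] (S : Subalgebra F E)

def denominatorIdeal (v : Set E) : Ideal S where
  carrier := {r | ∀ w ∈ v, (r : E) * w ∈ S}
  add_mem' {x y} hx hy w hw := by
    rw [Subalgebra.coe_add, add_mul]
    exact S.add_mem (hx w hw) (hy w hw)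
  zero_mem' w _ := by simp
  smul_mem' c x hx w hw := by
    rw [smul_eq_mul, Subalgebra.coe_mul, mul_assoc]
    exact S.mul_mem c.2 (hx w hw)

lemma mem_denominatorIdeal {v : Set E} {r : S} :
    r ∈ denominatorIdeal S v ↔ ∀ w ∈ v, (r : E) * w ∈ S :=
  Iff.rfl

lemma mul_mem_of_mem_span {v : Set E} {c : E} (hc : ∀ w ∈ v, c * w ∈ S) {w : E}
    (hw : w ∈ Submodule.span F v) : c * w ∈ S := by
  induction hw using Submodule.span_induction with
  | mem w hw => exact hc w hw
  | zero => simp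
  | add x y _ _ hx hy => rw [mul_add]; exact S.add_mem hx hy
  | smul f x _ hx => rw [Algebra.smul_def, mul_left_comm]; exact S.mul_mem (S.algebraMap_mem f) hx

lemma exists_common_denominator {v : Set E} (hvq : v ⊆ quotSet S)
    (hv : (Submodule.span F v).FG) : ∃ b ∈ S, b ≠ 0 ∧ ∀ w ∈ v, b * w ∈ S := by
  classical
  obtain ⟨T, hTv, hTspan⟩ := (Submodule.fg_span_iff_fg_span_finset_subset v).mp hv
  have hden : ∀ t ∈ T, ∃ s ∈ S, s ≠ 0 ∧ s * t ∈ S := fun t ht => by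
    obtain ⟨r, hr, s, hs, hs0, rfl⟩ := hvq (hTv ht)
    exact ⟨s, hs, hs0, by rwa [mul_div_cancel₀ _ hs0]⟩
  choose! s hs hs0 hst using hden
  refine ⟨∏ t ∈ T, s t, prod_mem hs, Finset.prod_ne_zero_iff.mpr hs0, fun w hw => ?_⟩
  refine mul_mem_of_mem_span S (fun t ht => ?_) (hTspan ▸ Submodule.subset_span hw)
  rw [← Finset.prod_erase_mul _ _ ht, mul_assoc]
  exact S.mul_mem (prod_mem fun u hu => hs u (Finset.mem_of_mem_erase hu)) (hst t ht)

end Denominators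

namespace IterativeDerivation

section CommRing

variable {m : ℕ} {E : Type*} [CommRing E] (θ : IterativeDerivation m E)

lemma D_zero (r : E) : θ.D 0 r = r := θ.coeff_zero r

lemma D_add (k : Fin m →₀ ℕ) (x y : E) : θ.D k (x + y) = θ.D k x + θ.D k y := by
  simp [D]

lemma D_mul (k : Fin m →₀ ℕ) (x y : E) :
    θ.D k (x * y) = ∑ ij ∈ Finset.HasAntidiagonal.antidiagonal k, θ.D ij.1 x * θ.D ij.2 y := by
  simp [D, coeff_mul]

lemma D_D (i j : Fin m →₀ ℕ) (x : E) : θ.D i (θ.D j x) = multiChoose i j • θ.D (i + j) x :=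
  θ.iterate i j x

lemma D_mem_span_range_D {F : Type*} [CommRing F] [Algebra F E] (i j : Fin m →₀ ℕ) (x : E) :
    θ.D i (θ.D j x) ∈ Submodule.span F (Set.range fun k => θ.D k x) := by
  rw [D_D]
  exact Submodule.smul_of_tower_mem _ _ (Submodule.subset_span ⟨i + j, rfl⟩)

end CommRing

section Field

variable {m : ℕ} {F E : Type*} [Field F] [Field E] [Algebra F E] (θ : IterativeDerivation m E)

lemma toRingHom_inv_eq {x : E} (hx : x ≠ 0) {g : MvPowerSeries (Fin m) F}
    (h : θ.toRingHom x = map (algebraMap F E) g * C x) :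
    θ.toRingHom x⁻¹ = map (algebraMap F E) g⁻¹ * C x⁻¹ := by
  have hg : constantCoeff g ≠ 0 := by
    intro hg0
    have h0 := congrArg (coeff 0) h
    rw [θ.coeff_zero, coeff_mul_C, coeff_map, coeff_zero_eq_constantCoeff_apply, hg0,
      map_zero, zero_mul] at h0
    exact hx h0
  refine left_inv_eq_right_inv (a := θ.toRingHom x) ?_ ?_
  · rw [← map_mul, inv_mul_cancel₀ hx, map_one]
  · calc θ.toRingHom x * (map (algebraMap F E) g⁻¹ * C x⁻¹)
        = map (algebraMap F E) (g * g⁻¹) * C (x * x⁻¹) := by rw [h, map_mul, map_mul]; ring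
      _ = 1 := by rw [MvPowerSeries.mul_inv_cancel g hg, mul_inv_cancel₀ hx, map_one, map_one,
          one_mul]

section Fundamental

variable {n : ℕ} {A : (Fin m →₀ ℕ) → Matrix (Fin n) (Fin n) F} {Y : Matrix (Fin n) (Fin n) E}

lemma D_apply_of_fundamental (hY : ∀ k, Y.map (θ.D k) = (A k).map (algebraMap F E) * Y)
    (k : Fin m →₀ ℕ) (a b : Fin n) :
    θ.D k (Y a b) = ∑ c, A k a c • Y c b := by
  simpa [Matrix.mul_apply, Algebra.smul_def] using congrFun (congrFun (hY k) a) b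

lemma toRingHom_det_of_fundamental (hY : ∀ k, Y.map (θ.D k) = (A k).map (algebraMap F E) * Y) :
    θ.toRingHom Y.det = map (algebraMap F E) (seriesMatrix A).det * C Y.det := by
  have hθY : Y.map θ.toRingHom = (seriesMatrix A).map (map (algebraMap F E)) * Y.map C := by
    ext a b l
    simp only [Matrix.map_apply, Matrix.mul_apply, map_sum, coeff_mul_C, coeff_map]
    have h := θ.D_apply_of_fundamental hY l a b
    simp only [Algebra.smul_def] at h
    exact h
  rw [RingHom.map_det, RingHom.mapMatrix_apply, hθY, Matrix.det_mul, ← RingHom.mapMatrix_apply,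
    ← RingHom.map_det, ← RingHom.mapMatrix_apply, ← RingHom.map_det]

lemma D_mem_span_solutionGenerators (hY : ∀ k, Y.map (θ.D k) = (A k).map (algebraMap F E) * Y)
    (hdet : Y.det ≠ 0) :
    ∀ w ∈ solutionGenerators Y, ∀ k, θ.D k w ∈ Submodule.span F (solutionGenerators Y) := by
  rintro w (⟨⟨a, b⟩, rfl⟩ | rfl) k
  · rw [θ.D_apply_of_fundamental hY]
    exact Submodule.sum_mem _ fun c _ =>
      Submodule.smul_mem _ _ (Submodule.subset_span (Or.inl ⟨(c, b), rfl⟩))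
  · have hinv := θ.toRingHom_inv_eq hdet (θ.toRingHom_det_of_fundamental hY)
    have hD : θ.D k Y.det⁻¹ = coeff k (seriesMatrix A).det⁻¹ • Y.det⁻¹ := by
      rw [D, hinv, coeff_mul_C, coeff_map, Algebra.smul_def]
    rw [hD]
    exact Submodule.smul_mem _ _ (Submodule.subset_span (Or.inr rfl))

end Fundamental

variable (F) in
def IsLocallyFinite (x : E) : Prop :=
  ∃ W : Submodule F E, W.FG ∧ ∀ k, θ.D k x ∈ W

lemma IsLocallyFinite.fg_span {x : E} (hx : θ.IsLocallyFinite F x) :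
    (Submodule.span F (Set.range fun k => θ.D k x)).FG := by
  obtain ⟨W, hW, hxW⟩ := hx
  exact hW.of_le (Submodule.span_le.mpr (Set.range_subset_iff.mpr hxW))

lemma isLocallyFinite_of_mem_adjoin {θF : IterativeDerivation m F} (hext : θF.Extends θ)
    {v : Set E} (hv : (Submodule.span F v).FG)
    (hvθ : ∀ w ∈ v, ∀ k, θ.D k w ∈ Submodule.span F v) {x : E} (hx : x ∈ Algebra.adjoin F v) :
    θ.IsLocallyFinite F x := by
  induction hx using Algebra.adjoin_induction with
  | mem w hw => exact ⟨_, hv, hvθ w hw⟩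
  | algebraMap f =>
    refine ⟨Submodule.span F {1}, Submodule.fg_span (Set.finite_singleton 1), fun k => ?_⟩
    rw [hext k f, Algebra.algebraMap_eq_smul_one]
    exact Submodule.smul_mem _ _ (Submodule.subset_span rfl)
  | add x y _ _ hx hy =>
    obtain ⟨W₁, hW₁, hx⟩ := hx
    obtain ⟨W₂, hW₂, hy⟩ := hy
    refine ⟨W₁ ⊔ W₂, hW₁.sup hW₂, fun k => ?_⟩
    rw [θ.D_add]
    exact Submodule.add_mem_sup (hx k) (hy k)
  | mul x y _ _ hx hy =>
    obtain ⟨W₁, hW₁, hx⟩ := hx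
    obtain ⟨W₂, hW₂, hy⟩ := hy
    refine ⟨W₁ * W₂, hW₁.mul hW₂, fun k => ?_⟩
    rw [θ.D_mul]
    exact Submodule.sum_mem _ fun ij _ => Submodule.mul_mem_mul (hx ij.1) (hy ij.2)

lemma D_mem_denominatorIdeal {S : Subalgebra F E} (hS : ∀ k, ∀ x ∈ S, θ.D k x ∈ S) {v : Set E}
    (hv : ∀ w ∈ v, ∀ k, θ.D k w ∈ Submodule.span F v) (k : Fin m →₀ ℕ) {r : S}
    (hr : r ∈ denominatorIdeal S v) : ∀ w ∈ v, θ.D k r * w ∈ S := by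
  induction k using WellFoundedLT.induction with
  | _ k ih =>
  intro w hw
  have hk0 : (k, 0) ∈ Finset.HasAntidiagonal.antidiagonal k := by simp
  have hLeibniz := θ.D_mul k r w
  rw [← Finset.add_sum_erase _ _ hk0, θ.D_zero] at hLeibniz
  rw [eq_sub_of_add_eq hLeibniz.symm]
  refine S.sub_mem (hS k _ (hr w hw)) (S.sum_mem fun ij hij => ?_)
  obtain ⟨hne, hsum⟩ := Finset.mem_erase.mp hij
  rw [Finset.HasAntidiagonal.mem_antidiagonal] at hsum
  have hj : ij.2 ≠ 0 := fun h => hne (Prod.ext (by simpa [h] using hsum) h)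
  have hlt : ij.1 < k := hsum ▸ lt_add_of_pos_right _ (pos_iff_ne_zero.mpr hj)
  exact mul_mem_of_mem_span S (ih ij.1 hlt) (hv w hw ij.2)

lemma subset_of_subset_quotSet {S : Subalgebra F E} (hS : ∀ k, ∀ x ∈ S, θ.D k x ∈ S)
    (hsimp : ∀ I : Ideal S,
      (∀ (k : Fin m →₀ ℕ) (x : S), x ∈ I → ∀ y : S, (y : E) = θ.D k (x : E) → y ∈ I) →
        I = ⊥ ∨ I = ⊤)
    {v : Set E} (hvq : v ⊆ quotSet S) (hvfg : (Submodule.span F v).FG)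
    (hv : ∀ w ∈ v, ∀ k, θ.D k w ∈ Submodule.span F v) : v ⊆ S := by
  obtain ⟨b, hb, hb0, hbv⟩ := exists_common_denominator S hvq hvfg
  have hstable : ∀ (k : Fin m →₀ ℕ) (r : S), r ∈ denominatorIdeal S v →
      ∀ y : S, (y : E) = θ.D k r → y ∈ denominatorIdeal S v := fun k r hr y hy =>
    (mem_denominatorIdeal S).mpr (hy ▸ θ.D_mem_denominatorIdeal hS hv k hr)
  rcases hsimp _ hstable with hbot | htop
  · have hbI : (⟨b, hb⟩ : S) ∈ denominatorIdeal S v := hbv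
    rw [hbot, Ideal.mem_bot] at hbI
    exact absurd (congrArg Subtype.val hbI) hb0
  · intro w hw
    simpa using (htop ▸ Submodule.mem_top : (1 : S) ∈ denominatorIdeal S v) w hw

end Field

end IterativeDerivation

theorem ppvRing_of_intermediate_eq_inter_general
    (m n n2 : ℕ)
    (F E : Type) [Field F] [Field E] [Algebra F E]
    (θF : IterativeDerivation m F) (θE : IterativeDerivation m E)
    (hext : θF.Extends θE)
    (R : Subalgebra F E)
    (A : (Fin m →₀ ℕ) → Matrix (Fin n) (Fin n) F)
    (hR : IsPPVSubalgebra θF θE R A) (hq : quotSet (R : Set E) = Set.univ)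
    (Ftil : IntermediateField F E)
    (hFtil : ∀ (k : Fin m →₀ ℕ), ∀ x ∈ Ftil, θE.D k x ∈ Ftil)
    (Rtil : Subalgebra F E) (hRtilFtil : (Rtil : Set E) ⊆ (Ftil : Set E))
    (Atil : (Fin m →₀ ℕ) → Matrix (Fin n2) (Fin n2) F)
    (hRtil : IsPPVSubalgebra θF θE Rtil Atil) (hq2 : quotSet (Rtil : Set E) = (Ftil : Set E)) :
    (Rtil : Set E) = (Ftil : Set E) ∩ (R : Set E) := by
  obtain ⟨hRstab, hRsimp, ⟨Y, -, hYdet, -, hY, hYgen⟩, -⟩ := hR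
  obtain ⟨hRtilstab, hRtilsimp, ⟨Z, -, hZdet, -, hZ, hZgen⟩, -⟩ := hRtil
  have hRtilR : Rtil ≤ R := by
    rw [← hZgen]
    refine Algebra.adjoin_le (θE.subset_of_subset_quotSet hRstab hRsimp ?_ ?_
      (θE.D_mem_span_solutionGenerators hZ hZdet))
    · simp [hq]
    · exact Submodule.fg_span (finite_solutionGenerators _)
  refine subset_antisymm (fun x hx => ⟨hRtilFtil hx, hRtilR hx⟩) ?_
  rintro x ⟨hxFtil, hxR⟩
  have hx : θE.IsLocallyFinite F x := θE.isLocallyFinite_of_mem_adjoin hext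
    (Submodule.fg_span (finite_solutionGenerators _))
    (θE.D_mem_span_solutionGenerators hY hYdet) (hYgen ▸ hxR)
  have horbit := θE.subset_of_subset_quotSet hRtilstab hRtilsimp
    (by rintro _ ⟨k, rfl⟩; exact hq2 ▸ hFtil k x hxFtil) hx.fg_span
    (by rintro _ ⟨j, rfl⟩ k; exact θE.D_mem_span_range_D k j x)
  simpa [θE.D_zero] using horbit ⟨0, rfl⟩

/-- Let `E` be a PPV-field over the ID-field `(F, θF)` of characteristic `p > 0` with
PPV-ring `R ⊆ E`, and let `Ftil` (`F ⊆ Ftil ⊆ E`) be an intermediate ID-field which is itself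
a PPV-field over `F` with PPV-ring `Rtil ⊆ Ftil` (so `Quot(Rtil) = Ftil`). Then `Rtil = Ftil ∩ R`. -/
theorem ppvRing_of_intermediate_eq_inter
    (m n n2 p : ℕ) (hp : p.Prime)
    (F E : Type) [Field F] [CharP F p] [Field E] [Algebra F E]
    (θF : IterativeDerivation m F) (θE : IterativeDerivation m E)
    (hext : θF.Extends θE)
    (R : Subalgebra F E)
    (A : (Fin m →₀ ℕ) → Matrix (Fin n) (Fin n) F) (hA : IsIDE θF A)
    (hR : IsPPVSubalgebra θF θE R A) (hq : quotSet (R : Set E) = Set.univ)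
    (Ftil : IntermediateField F E)
    (hFtil : ∀ (k : Fin m →₀ ℕ), ∀ x ∈ Ftil, θE.D k x ∈ Ftil)
    (Rtil : Subalgebra F E) (hRtilFtil : (Rtil : Set E) ⊆ (Ftil : Set E))
    (Atil : (Fin m →₀ ℕ) → Matrix (Fin n2) (Fin n2) F) (hAtil : IsIDE θF Atil)
    (hRtil : IsPPVSubalgebra θF θE Rtil Atil) (hq2 : quotSet (Rtil : Set E) = (Ftil : Set E)) :
    (Rtil : Set E) = (Ftil : Set E) ∩ (R : Set E) :=
  ppvRing_of_intermediate_eq_inter_general m n n2 F E θF θE hext R A hR hq Ftil hFtil Rtil hRtilFtil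
    Atil hRtil hq2
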